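/- arXiv:2406.08579 — 2 statements merged into one kernel-verified Lean document; each statement's English description precedes it below -/
import Mathlib

section
/- Let p > 1 be a real number and ε > 0. Let a, b, c, d be real numbers with c ≥ 0 and d ≥ 0, and suppose that c = 0 whenever a ≤ ε and d = 0 whenever b ≤ ε. Then Φ_p((a − ε)⁺ − (b − ε)⁺)·(c − d) ≤ Φ_p(a − b)·(c − d). -/
/-!
Only the monotonicity of `Φ_p` matters. Writing `X = (a - ε)⁺ - (b - ε)⁺`, the difference of
the two sides is `c (Φ_p(a - b) - Φ_p X) + d (Φ_p X - Φ_p(a - b))`. Where `c > 0` we have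
`a > ε`, hence `X = (a - ε) - (b - ε)⁺ ≤ a - b`; where `d > 0` we have `b > ε`, hence
`X = (a - ε)⁺ - (b - ε) ≥ a - b`. So both terms are nonnegative.
-/

/-- `Φ_p(t) = |t|^{p-2} t`. -/
noncomputable def Phi (p t : ℝ) : ℝ := |t| ^ (p - 2) * t

lemma Phi_neg (p t : ℝ) : Phi p (-t) = -Phi p t := by
  rw [Phi, Phi, abs_neg]
  ring

lemma Phi_nonneg (p : ℝ) {t : ℝ} (ht : 0 ≤ t) : 0 ≤ Phi p t :=
  mul_nonneg (Real.rpow_nonneg (abs_nonneg t) _) ht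

lemma Phi_of_pos (p : ℝ) {t : ℝ} (ht : 0 < t) : Phi p t = t ^ (p - 1) := by
  rw [Phi, abs_of_pos ht, ← Real.rpow_add_one ht.ne']
  ring_nf

lemma monotoneOn_Phi_Ici {p : ℝ} (hp : 1 ≤ p) : MonotoneOn (Phi p) (Set.Ici 0) := by
  intro s (hs : 0 ≤ s) t _ hst
  rcases hs.eq_or_lt with rfl | hs
  · simpa [Phi] using Phi_nonneg p (hs.trans hst)
  · rw [Phi_of_pos p hs, Phi_of_pos p (hs.trans_le hst)]
    exact Real.rpow_le_rpow hs.le hst (by linarith)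

lemma monotone_Phi {p : ℝ} (hp : 1 ≤ p) : Monotone (Phi p) :=
  monotone_of_odd_of_monotoneOn_nonneg (Phi_neg p) (monotoneOn_Phi_Ici hp)

lemma posPart_sub_posPart_le_of_lt {ε a : ℝ} (ha : ε < a) (b : ℝ) :
    max (a - ε) 0 - max (b - ε) 0 ≤ a - b := by
  rw [max_eq_left (sub_nonneg.2 ha.le)]
  linarith [le_max_left (b - ε) 0]

lemma sub_le_posPart_sub_posPart_of_lt {ε b : ℝ} (a : ℝ) (hb : ε < b) :
    a - b ≤ max (a - ε) 0 - max (b - ε) 0 := by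
  rw [max_eq_left (sub_nonneg.2 hb.le)]
  linarith [le_max_left (a - ε) 0]

theorem Monotone.truncation_mul_sub_le {f : ℝ → ℝ} (hf : Monotone f) {ε a b c d : ℝ}
    (hc : 0 ≤ c) (hd : 0 ≤ d) (hc0 : a ≤ ε → c = 0) (hd0 : b ≤ ε → d = 0) :
    f (max (a - ε) 0 - max (b - ε) 0) * (c - d) ≤ f (a - b) * (c - d) := by
  set X := max (a - ε) 0 - max (b - ε) 0
  have hcX : 0 ≤ c * (f (a - b) - f X) := by
    rcases le_or_gt a ε with ha | ha
    · simp [hc0 ha]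
    · exact mul_nonneg hc (sub_nonneg.2 (hf (posPart_sub_posPart_le_of_lt ha b)))
  have hdX : 0 ≤ d * (f X - f (a - b)) := by
    rcases le_or_gt b ε with hb | hb
    · simp [hd0 hb]
    · exact mul_nonneg hd (sub_nonneg.2 (hf (sub_le_posPart_sub_posPart_of_lt a hb)))
  linear_combination hcX + hdX

theorem Phi_truncation_pointwise_general (p ε : ℝ) (hp : 1 < p)
    (a b c d : ℝ) (hc : 0 ≤ c) (hd : 0 ≤ d)
    (hc0 : a ≤ ε → c = 0) (hd0 : b ≤ ε → d = 0) :
    Phi p (max (a - ε) 0 - max (b - ε) 0) * (c - d) ≤ Phi p (a - b) * (c - d) :=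
  (monotone_Phi hp.le).truncation_mul_sub_le hc hd hc0 hd0

/-- Pointwise inequality comparing the weak form of the fractional p-Laplacian of the
truncation `(u − ε)⁺` with that of `u`, against nonnegative test values supported in
`{u > ε}`. -/
theorem Phi_truncation_pointwise (p ε : ℝ) (hp : 1 < p) (hε : 0 < ε)
    (a b c d : ℝ) (hc : 0 ≤ c) (hd : 0 ≤ d)
    (hc0 : a ≤ ε → c = 0) (hd0 : b ≤ ε → d = 0) :
    Phi p (max (a - ε) 0 - max (b - ε) 0) * (c - d) ≤ Phi p (a - b) * (c - d) :=
  Phi_truncation_pointwise_general p ε hp a b c d hc hd hc0 hd0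
end

section
/- Let p > 1 be a real number. For all real numbers a and b, one has Φ_p(a − b)·(a⁻ − b⁻) ≤ −|a⁻ − b⁻|^p. -/
section NegPart

variable {α : Type*}

lemma sub_mul_negPart_sub_negPart_nonpos [Ring α] [LinearOrder α] [IsStrictOrderedRing α]
    (a b : α) : (a - b) * (a⁻ - b⁻) ≤ 0 :=
  (monotone_id.antivary negPart_anti).sub_mul_sub_nonpos b a

lemma abs_negPart_sub_negPart_le [AddCommGroup α] [LinearOrder α] [IsOrderedAddMonoid α]
    (a b : α) : |a⁻ - b⁻| ≤ |a - b| := by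
  rw [negPart_def, negPart_def, ← abs_neg (a - b), neg_sub']
  exact abs_max_sub_max_le_abs (-a) (-b) 0

end NegPart

lemma abs_Phi (p t : ℝ) : |Phi p t| = |t| ^ (p - 2) * |t| := by
  rw [Phi, abs_mul, abs_of_nonneg (Real.rpow_nonneg (abs_nonneg t) _)]

lemma abs_Phi_eq_rpow {p : ℝ} (hp : p ≠ 1) (t : ℝ) : |Phi p t| = |t| ^ (p - 1) := by
  rw [abs_Phi, ← Real.rpow_add_one' (abs_nonneg t) (by contrapose! hp; linarith)]
  ring_nf

lemma Phi_mul_of_mul_nonpos {p t d : ℝ} (h : t * d ≤ 0) : Phi p t * d = -(|Phi p t| * |d|) := by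
  rw [abs_Phi, mul_assoc, ← abs_mul, abs_of_nonpos h, Phi, mul_assoc]
  ring

lemma Phi_mul_le_neg_abs_rpow {p t d : ℝ} (hp : 1 < p) (hsign : t * d ≤ 0) (hle : |d| ≤ |t|) :
    Phi p t * d ≤ -|d| ^ p := by
  have hp₁ : 0 ≤ p - 1 := by linarith
  calc Phi p t * d = -(|t| ^ (p - 1) * |d|) := by
        rw [Phi_mul_of_mul_nonpos hsign, abs_Phi_eq_rpow hp.ne']
    _ ≤ -(|d| ^ (p - 1) * |d|) := by gcongr
    _ = -|d| ^ p := by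
        rw [← Real.rpow_add_one' (abs_nonneg d) (by linarith), sub_add_cancel]

/-- Testing against negative parts: `Φ_p(a − b)(a⁻ − b⁻) ≤ −|a⁻ − b⁻|^p`. -/
theorem Phi_negPart_pointwise (p : ℝ) (hp : 1 < p) (a b : ℝ) :
    Phi p (a - b) * (max (-a) 0 - max (-b) 0) ≤ -|max (-a) 0 - max (-b) 0| ^ p :=
  Phi_mul_le_neg_abs_rpow hp (sub_mul_negPart_sub_negPart_nonpos a b)
    (abs_negPart_sub_negPart_le a b)
end
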